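/- Let r ≥ 0 be an integer, let σ(x) = 1/(1+e^{-x}) be the sigmoid function, and for B > 0 let δ_B(x) = σ(Bx) − σ(B(x−1)). There exists a constant C > 0 depending only on r such that for every B ≥ 1, all integers 0 ≤ k, ℓ ≤ r+1 with |k − ℓ| ≥ 2, and every integer 0 ≤ j ≤ r, sup_{x ∈ [ℓ, ℓ+1)} | (d^j/dx^j)[ δ_B(x − k) ] | ≤ C · B^r · e^{−B}. -/

import Mathlib

open Real MeasureTheory

/-- The sigmoid function `σ(x) = 1/(1+e^{-x})`. -/
noncomputable def sigmoid (x : ℝ) : ℝ := 1 / (1 + Real.exp (-x))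

/-- `δ_B(x) = σ(Bx) - σ(B(x-1))`, a smooth approximation of the indicator of `[0,1)`. -/
noncomputable def deltaB (B x : ℝ) : ℝ := _root_.sigmoid (B * x) - _root_.sigmoid (B * (x - 1))

/-!
Every derivative of `σ` is a polynomial in `σ`, and from the first one on it carries the factor
`σ' = σ (1 - σ) ≤ exp (-|x|)`; so `σ⁽ʲ⁾` decays like `exp (-|x|)` for `j ≥ 1`, while `σ` itself is
within `exp (-B)` of `0` on `(-∞, -B]` and of `1` on `[B, ∞)`. Since
`δ_B⁽ʲ⁾(z) = Bʲ (σ⁽ʲ⁾(B z) - σ⁽ʲ⁾(B (z - 1)))`, and for `x ∈ [ℓ, ℓ + 1)`, `|k - ℓ| ≥ 2` the point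
`z = x - k` satisfies `z ≤ -1` or `z ≥ 2`, both arguments lie beyond `±B` on the same side.
-/

theorem sigmoid_eq_real_sigmoid : _root_.sigmoid = Real.sigmoid := by
  funext x
  rw [_root_.sigmoid, Real.sigmoid_def, one_div]

open Polynomial

namespace Real

theorem sigmoid_le_exp (x : ℝ) : sigmoid x ≤ exp x :=
  calc sigmoid x = sigmoid (-x) * exp x := by simpa using (sigmoid_mul_rexp_neg (-x)).symm
    _ ≤ exp x := mul_le_of_le_one_left (exp_pos x).le (sigmoid_le_one _)

theorem sigmoid_mul_one_sub_sigmoid_le_exp_neg_abs (x : ℝ) :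
    sigmoid x * (1 - sigmoid x) ≤ exp (-|x|) := by
  rw [← sigmoid_neg]
  rcases abs_choice x with h | h <;> rw [h]
  · exact (mul_le_of_le_one_left (sigmoid_nonneg _) (sigmoid_le_one x)).trans (sigmoid_le_exp _)
  · rw [neg_neg]
    exact (mul_le_of_le_one_right (sigmoid_nonneg _) (sigmoid_le_one _)).trans (sigmoid_le_exp _)

theorem exists_iteratedDeriv_succ_sigmoid_eq (n : ℕ) : ∃ p : ℝ[X], ∀ x,
    iteratedDeriv (n + 1) sigmoid x = p.eval (sigmoid x) * (sigmoid x * (1 - sigmoid x)) := by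
  induction n with
  | zero => exact ⟨1, fun x => by rw [iteratedDeriv_one, deriv_sigmoid, eval_one, one_mul]⟩
  | succ n ih =>
    obtain ⟨p, hp⟩ := ih
    set q : ℝ[X] := p * (X - X ^ 2)
    have hq : iteratedDeriv (n + 1) sigmoid = fun x => q.eval (sigmoid x) := by
      funext x
      simp only [hp, q, eval_mul, eval_sub, eval_X, eval_pow]
      ring
    refine ⟨derivative q, fun x => ?_⟩
    rw [iteratedDeriv_succ, hq]
    exact ((q.hasDerivAt _).comp x (hasDerivAt_sigmoid x)).deriv

theorem exists_abs_iteratedDeriv_succ_sigmoid_le (n : ℕ) :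
    ∃ C, ∀ x, |iteratedDeriv (n + 1) sigmoid x| ≤ C * exp (-|x|) := by
  obtain ⟨p, hp⟩ := exists_iteratedDeriv_succ_sigmoid_eq n
  obtain ⟨C, hC⟩ :=
    isCompact_Icc.exists_bound_of_continuousOn (p.continuous.continuousOn (s := Set.Icc 0 1))
  refine ⟨C, fun x => ?_⟩
  have hσ : sigmoid x ∈ Set.Icc (0 : ℝ) 1 := ⟨sigmoid_nonneg x, sigmoid_le_one x⟩
  have hσ' : 0 ≤ sigmoid x * (1 - sigmoid x) :=
    mul_nonneg (sigmoid_nonneg x) (sub_nonneg.mpr (sigmoid_le_one x))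
  rw [hp, abs_mul, abs_of_nonneg hσ']
  exact mul_le_mul (hC _ hσ) (sigmoid_mul_one_sub_sigmoid_le_exp_neg_abs x) hσ'
    ((norm_nonneg _).trans (hC _ hσ))

theorem abs_sigmoid_sub_sigmoid_le_of_le_neg {B s t : ℝ} (hs : s ≤ -B) (ht : t ≤ -B) :
    |sigmoid s - sigmoid t| ≤ exp (-B) :=
  abs_sub_le_of_nonneg_of_le (sigmoid_nonneg s) ((sigmoid_le_exp s).trans (exp_le_exp.mpr hs))
    (sigmoid_nonneg t) ((sigmoid_le_exp t).trans (exp_le_exp.mpr ht))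

theorem abs_sigmoid_sub_sigmoid_le_of_le {B s t : ℝ} (hs : B ≤ s) (ht : B ≤ t) :
    |sigmoid s - sigmoid t| ≤ exp (-B) := by
  have h : sigmoid s - sigmoid t = sigmoid (-t) - sigmoid (-s) := by
    rw [sigmoid_neg, sigmoid_neg]; ring
  rw [h]
  exact abs_sigmoid_sub_sigmoid_le_of_le_neg (neg_le_neg ht) (neg_le_neg hs)

theorem exists_abs_iteratedDeriv_sigmoid_sub_le (j : ℕ) : ∃ C, ∀ {B s t : ℝ},
    (B ≤ s ∧ B ≤ t ∨ s ≤ -B ∧ t ≤ -B) →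
      |iteratedDeriv j sigmoid s - iteratedDeriv j sigmoid t| ≤ C * exp (-B) := by
  cases j with
  | zero =>
    refine ⟨1, fun h => ?_⟩
    rw [one_mul]
    rcases h with ⟨hs, ht⟩ | ⟨hs, ht⟩
    exacts [abs_sigmoid_sub_sigmoid_le_of_le hs ht, abs_sigmoid_sub_sigmoid_le_of_le_neg hs ht]
  | succ n =>
    obtain ⟨C, hC⟩ := exists_abs_iteratedDeriv_succ_sigmoid_le n
    refine ⟨2 * C, fun {B s t} h => ?_⟩
    have hB : B ≤ |s| ∧ B ≤ |t| := by
      rcases h with ⟨hs, ht⟩ | ⟨hs, ht⟩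
      · exact ⟨hs.trans (le_abs_self s), ht.trans (le_abs_self t)⟩
      · exact ⟨le_neg.mp hs |>.trans (neg_le_abs s), le_neg.mp ht |>.trans (neg_le_abs t)⟩
    have hC0 : 0 ≤ C := nonneg_of_mul_nonneg_left ((abs_nonneg _).trans (hC 0)) (exp_pos _)
    calc |iteratedDeriv (n + 1) sigmoid s - iteratedDeriv (n + 1) sigmoid t|
        ≤ C * exp (-|s|) + C * exp (-|t|) := (abs_sub _ _).trans (add_le_add (hC s) (hC t))
      _ ≤ C * exp (-B) + C * exp (-B) := by gcongr <;> linarith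
      _ = 2 * C * exp (-B) := by ring

end Real

theorem iteratedDeriv_deltaB (B : ℝ) (j : ℕ) (z : ℝ) :
    iteratedDeriv j (deltaB B) z = B ^ j *
      (iteratedDeriv j Real.sigmoid (B * z) - iteratedDeriv j Real.sigmoid (B * (z - 1))) := by
  have hσB : ContDiff ℝ j fun z => Real.sigmoid (B * z) :=
    (contDiff_sigmoid.of_le le_top).comp (contDiff_const.mul contDiff_id)
  have hσB' : ContDiff ℝ j fun z => Real.sigmoid (B * (z - 1)) :=
    hσB.comp (contDiff_id.sub contDiff_const)
  have hδ : deltaB B = fun z => Real.sigmoid (B * z) - Real.sigmoid (B * (z - 1)) := by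
    funext z
    rw [deltaB, sigmoid_eq_real_sigmoid]
  rw [hδ, iteratedDeriv_fun_sub hσB.contDiffAt hσB'.contDiffAt,
    iteratedDeriv_comp_sub_const j (fun z => Real.sigmoid (B * z)),
    iteratedDeriv_comp_const_mul (contDiff_sigmoid.of_le le_top), mul_sub]

theorem exists_abs_iteratedDeriv_deltaB_le (r : ℕ) : ∃ C > 0, ∀ j ≤ r, ∀ B, 0 ≤ B → ∀ z,
    (z ≤ -1 ∨ 2 ≤ z) → |iteratedDeriv j (deltaB B) z| ≤ C * B ^ j * exp (-B) := by
  choose C hC using Real.exists_abs_iteratedDeriv_sigmoid_sub_le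
  refine ⟨1 + ∑ i ∈ Finset.range (r + 1), |C i|, by positivity, fun j hj B hB z hz => ?_⟩
  have hCj : C j ≤ 1 + ∑ i ∈ Finset.range (r + 1), |C i| :=
    (le_abs_self _).trans <| (Finset.single_le_sum (fun i _ => abs_nonneg (C i))
      (Finset.mem_range_succ_iff.mpr hj)).trans (le_add_of_nonneg_left zero_le_one)
  have hfar : B ≤ B * z ∧ B ≤ B * (z - 1) ∨ B * z ≤ -B ∧ B * (z - 1) ≤ -B := by
    rcases hz with hz | hz
    · right; constructor <;> nlinarith
    · left; constructor <;> nlinarith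
  rw [iteratedDeriv_deltaB, abs_mul, abs_of_nonneg (pow_nonneg hB j), mul_comm _ (B ^ j),
    mul_assoc]
  gcongr
  exact (hC j hfar).trans (by gcongr)

theorem sub_le_neg_one_or_two_le_sub_of_mem_Ico {k ℓ : ℕ} (hkℓ : 2 ≤ |(k : ℤ) - (ℓ : ℤ)|) {x : ℝ}
    (hx : x ∈ Set.Ico (ℓ : ℝ) (ℓ + 1)) : x - k ≤ -1 ∨ 2 ≤ x - k := by
  obtain ⟨hℓx, hxℓ⟩ := hx
  rcases le_abs'.mp hkℓ with h | h
  · have : (k : ℝ) + 2 ≤ ℓ := by exact_mod_cast (by omega : (k : ℤ) + 2 ≤ ℓ)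
    right; linarith
  · have : (ℓ : ℝ) + 2 ≤ k := by exact_mod_cast (by omega : (ℓ : ℤ) + 2 ≤ k)
    left; linarith

/-- decay of the translate `δ_B(· - k)` on the unit interval `[ℓ, ℓ+1)` when
`|k - ℓ| ≥ 2`, together with all derivatives up to order `r`. -/
theorem stmt1 (r : ℕ) :
    ∃ C > (0:ℝ), ∀ B : ℝ, 1 ≤ B → ∀ k ℓ : ℕ, k ≤ r + 1 → ℓ ≤ r + 1 →
      2 ≤ |(k : ℤ) - (ℓ : ℤ)| → ∀ j : ℕ, j ≤ r → ∀ x ∈ Set.Ico (ℓ : ℝ) (ℓ + 1),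
      |iteratedDeriv j (fun y => deltaB B (y - k)) x| ≤ C * B ^ r * Real.exp (-B) := by
  obtain ⟨C, hC, hδ⟩ := exists_abs_iteratedDeriv_deltaB_le r
  refine ⟨C, hC, fun B hB k ℓ _ _ hkℓ j hj x hx => ?_⟩
  rw [iteratedDeriv_comp_sub_const j (deltaB B)]
  calc |iteratedDeriv j (deltaB B) (x - k)| ≤ C * B ^ j * exp (-B) :=
        hδ j hj B (zero_le_one.trans hB) _ (sub_le_neg_one_or_two_le_sub_of_mem_Ico hkℓ hx)
    _ ≤ C * B ^ r * exp (-B) := by gcongr
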